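/- arXiv:1610.08831 — 5 statements merged into one kernel-verified Lean document; each statement's English description precedes it below -/
import Mathlib

section
/- Morphology property of the operator: let u : ℝ² → ℝ be twice differentiable and g : ℝ → ℝ be twice differentiable. Then G[g ∘ u](x,y) = (g′(u(x,y)))³ · G[u](x,y) for all (x,y) ∈ ℝ², and consequently cbrt(G[g ∘ u]) = g′(u) · cbrt(G[u]) wherever g′(u) ≥ 0. -/
/-! By the chain rule the first derivatives of `g ∘ u` are `g'(u) ∇u` and the second ones are
`g''(u) u_i u_j + g'(u) u_ij`. In `G[g ∘ u]` the `g''` terms add up to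
`g''(u) (u_x² u_y² − 2 u_x² u_y² + u_y² u_x²) = 0`, leaving `g'(u)³ G[u]`. The real cube root is
multiplicative and inverts cubing, so `cbrt (g'³ G) = g' · cbrt G`. -/

/-- The real cube root: `cbrt r = sgn(r) · |r|^{1/3}`. -/
noncomputable def cbrt (r : ℝ) : ℝ := Real.sign r * |r| ^ ((1 : ℝ) / 3)

/-- `G[u] = u_{xx} u_y² − 2 u_x u_y u_{xy} + u_{yy} u_x²`, where the partial derivatives
are taken via the (iterated) Fréchet derivative evaluated at the coordinate directions. -/
noncomputable def Gop (u : ℝ × ℝ → ℝ) (p : ℝ × ℝ) : ℝ :=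
  let ux := fderiv ℝ u p (1, 0)
  let uy := fderiv ℝ u p (0, 1)
  let uxx := fderiv ℝ (fun q => fderiv ℝ u q (1, 0)) p (1, 0)
  let uxy := fderiv ℝ (fun q => fderiv ℝ u q (1, 0)) p (0, 1)
  let uyy := fderiv ℝ (fun q => fderiv ℝ u q (0, 1)) p (0, 1)
  uxx * uy ^ 2 - 2 * ux * uy * uxy + uyy * ux ^ 2

theorem Real.sign_mul (a b : ℝ) : Real.sign (a * b) = Real.sign a * Real.sign b := by
  rcases lt_trichotomy a 0 with ha | rfl | ha <;> rcases lt_trichotomy b 0 with hb | rfl | hb <;>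
    simp [Real.sign_of_neg, Real.sign_of_pos, mul_pos_of_neg_of_neg, mul_neg_of_neg_of_pos,
      mul_neg_of_pos_of_neg, *]

theorem cbrt_mul (a b : ℝ) : cbrt (a * b) = cbrt a * cbrt b := by
  simp only [cbrt, Real.sign_mul, abs_mul, Real.mul_rpow (abs_nonneg a) (abs_nonneg b)]
  ring

theorem cbrt_pow_three (c : ℝ) : cbrt (c ^ 3) = c := by
  have h : |c ^ 3| ^ ((1 : ℝ) / 3) = |c| := by
    rw [abs_pow, one_div]
    exact_mod_cast Real.pow_rpow_inv_natCast (abs_nonneg c) three_ne_zero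
  rcases lt_trichotomy c 0 with hc | rfl | hc
  · rw [cbrt, h, Real.sign_of_neg (Odd.pow_neg (by decide) hc), abs_of_neg hc]; ring
  · simp [cbrt]
  · rw [cbrt, h, Real.sign_of_pos (pow_pos hc 3), abs_of_pos hc]; ring

section Chain

variable {E : Type*} [NormedAddCommGroup E] [NormedSpace ℝ E] {u : E → ℝ} {g : ℝ → ℝ} {p : E}

theorem fderiv_comp_eq_deriv_smul (hg : DifferentiableAt ℝ g (u p))
    (hu : DifferentiableAt ℝ u p) :
    fderiv ℝ (fun q => g (u q)) p = deriv g (u p) • fderiv ℝ u p :=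
  (hg.hasDerivAt.comp_hasFDerivAt p hu.hasFDerivAt).fderiv

theorem fderiv_fderiv_comp_apply (hg : Differentiable ℝ g) (hu : Differentiable ℝ u)
    (hg' : DifferentiableAt ℝ (deriv g) (u p)) {v : E}
    (huv : DifferentiableAt ℝ (fun q => fderiv ℝ u q v) p) (w : E) :
    fderiv ℝ (fun q => fderiv ℝ (fun r => g (u r)) q v) p w =
      deriv (deriv g) (u p) * fderiv ℝ u p w * fderiv ℝ u p v +
        deriv g (u p) * fderiv ℝ (fun q => fderiv ℝ u q v) p w := by
  have hfirst : (fun q => fderiv ℝ (fun r => g (u r)) q v) =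
      fun q => deriv g (u q) * fderiv ℝ u q v := by
    ext q
    rw [fderiv_comp_eq_deriv_smul (hg _) (hu q)]
    rfl
  have hg'u : DifferentiableAt ℝ (fun q => deriv g (u q)) p := hg'.comp p (hu p)
  rw [hfirst, fderiv_fun_mul hg'u huv, fderiv_comp_eq_deriv_smul hg' (hu p)]
  simp only [add_apply, smul_apply, smul_eq_mul]
  ring

end Chain

theorem Gop_comp {u : ℝ × ℝ → ℝ} {g : ℝ → ℝ} (hu : ContDiff ℝ 2 u) (hg : ContDiff ℝ 2 g)
    (p : ℝ × ℝ) : Gop (fun q => g (u q)) p = deriv g (u p) ^ 3 * Gop u p := by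
  have hu' : Differentiable ℝ u := hu.differentiable two_ne_zero
  have hg' : Differentiable ℝ g := hg.differentiable two_ne_zero
  have hg'' : Differentiable ℝ (deriv g) :=
    (hg.iterate_deriv' 1 1).differentiable one_ne_zero
  have huv (v : ℝ × ℝ) : Differentiable ℝ (fun q => fderiv ℝ u q v) :=
    ((hu.fderiv_right one_add_one_eq_two.le).clm_apply contDiff_const).differentiable one_ne_zero
  simp only [Gop, fderiv_comp_eq_deriv_smul (hg' _) (hu' p), smul_apply, smul_eq_mul,
    fderiv_fderiv_comp_apply hg' hu' (hg'' _) (huv _ p)]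
  ring

/-- Morphology property of the operator: `G[g ∘ u] = (g′(u))³ G[u]`, and consequently
`cbrt (G[g ∘ u]) = g′(u) · cbrt (G[u])` wherever `g′(u) ≥ 0`. -/
theorem affine_curvature_morphology (u : ℝ × ℝ → ℝ) (g : ℝ → ℝ)
    (hu : ContDiff ℝ 2 u) (hg : ContDiff ℝ 2 g) :
    (∀ p : ℝ × ℝ, Gop (fun q => g (u q)) p = (deriv g (u p)) ^ 3 * Gop u p) ∧
      (∀ p : ℝ × ℝ, 0 ≤ deriv g (u p) →
        cbrt (Gop (fun q => g (u q)) p) = deriv g (u p) * cbrt (Gop u p)) :=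
  ⟨Gop_comp hu hg, fun p _ => by rw [Gop_comp hu hg, cbrt_mul, cbrt_pow_three]⟩
end

section
/- Affine invariance of the operator: let u : ℝ² → ℝ be twice differentiable, A a real 2×2 matrix, b ∈ ℝ², and φ(x) := Ax + b. Then G[u ∘ φ](x) = (det A)² · G[u](φ(x)) for all x ∈ ℝ², and consequently cbrt(G[u ∘ φ]) = (det A)^{2/3} · cbrt(G[u]) ∘ φ. -/
theorem cbrt_mul_of_nonneg {c : ℝ} (hc : 0 ≤ c) (x : ℝ) :
    cbrt (c * x) = c ^ ((1 : ℝ) / 3) * cbrt x := by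
  rcases hc.eq_or_lt with rfl | hc
  · simp [cbrt]
  have hsign : Real.sign (c * x) = Real.sign x := by
    rcases lt_trichotomy x 0 with hx | rfl | hx
    · rw [Real.sign_of_neg hx, Real.sign_of_neg (mul_neg_of_pos_of_neg hc hx)]
    · simp
    · rw [Real.sign_of_pos hx, Real.sign_of_pos (mul_pos hc hx)]
  rw [cbrt, cbrt, hsign, abs_mul, abs_of_pos hc, Real.mul_rpow hc.le (abs_nonneg x)]
  ring

theorem ContinuousLinearMap.apply_prod_eq_smul_add_smul {R M : Type*} [Semiring R]
    [TopologicalSpace R] [AddCommMonoid M] [Module R M] [TopologicalSpace M]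
    (L : R × R →L[R] M) (x y : R) : L (x, y) = x • L (1, 0) + y • L (0, 1) := by
  have hxy : ((x, y) : R × R) = x • (1, 0) + y • (0, 1) := by simp
  rw [hxy, map_add, map_smul, map_smul]

/-- The linear map `q ↦ A q` of `ℝ²` for the matrix `A = !![a11, a12; a21, a22]`. -/
noncomputable def linearMapOfEntries (a11 a12 a21 a22 : ℝ) : ℝ × ℝ →L[ℝ] ℝ × ℝ :=
  (a11 • ContinuousLinearMap.fst ℝ ℝ ℝ + a12 • ContinuousLinearMap.snd ℝ ℝ ℝ).prod
    (a21 • ContinuousLinearMap.fst ℝ ℝ ℝ + a22 • ContinuousLinearMap.snd ℝ ℝ ℝ)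

@[simp]
theorem linearMapOfEntries_apply (a11 a12 a21 a22 : ℝ) (q : ℝ × ℝ) :
    linearMapOfEntries a11 a12 a21 a22 q = (a11 * q.1 + a12 * q.2, a21 * q.1 + a22 * q.2) := by
  simp [linearMapOfEntries]

/-- The expression `G` with `L` in the role of `Du(p)` and `B` in that of `D²u(p)`. -/
noncomputable def curvatureForm (L : ℝ × ℝ →L[ℝ] ℝ) (B : ℝ × ℝ →L[ℝ] ℝ × ℝ →L[ℝ] ℝ) : ℝ :=
  B (1, 0) (1, 0) * L (0, 1) ^ 2 - 2 * L (1, 0) * L (0, 1) * B (0, 1) (1, 0) +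
    B (0, 1) (0, 1) * L (1, 0) ^ 2

theorem curvatureForm_comp (L : ℝ × ℝ →L[ℝ] ℝ) (B : ℝ × ℝ →L[ℝ] ℝ × ℝ →L[ℝ] ℝ)
    (hB : ∀ v w, B v w = B w v) (a11 a12 a21 a22 : ℝ) :
    let A := linearMapOfEntries a11 a12 a21 a22
    curvatureForm (L.comp A) (B.bilinearComp A A) =
      (a11 * a22 - a12 * a21) ^ 2 * curvatureForm L B := by
  have hL : ∀ x y : ℝ, L (x, y) = x * L (1, 0) + y * L (0, 1) :=
    L.apply_prod_eq_smul_add_smul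
  have hB' : ∀ x y z w : ℝ, B (x, y) (z, w) =
      x * z * B (1, 0) (1, 0) + x * w * B (1, 0) (0, 1) + y * z * B (0, 1) (1, 0) +
        y * w * B (0, 1) (0, 1) := by
    intro x y z w
    rw [B.apply_prod_eq_smul_add_smul x y, add_apply, smul_apply, smul_apply,
      (B (1, 0)).apply_prod_eq_smul_add_smul z w, (B (0, 1)).apply_prod_eq_smul_add_smul z w]
    simp only [smul_eq_mul]
    ring
  simp only [curvatureForm, ContinuousLinearMap.comp_apply, ContinuousLinearMap.bilinearComp_apply,
    linearMapOfEntries_apply, mul_one, mul_zero, add_zero, zero_add]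
  rw [hL a11 a21, hL a12 a22, hB' a11 a21 a11 a21, hB' a12 a22 a11 a21, hB' a12 a22 a12 a22,
    hB (0, 1) (1, 0)]
  ring

theorem Gop_eq_curvatureForm {u : ℝ × ℝ → ℝ} {H : ℝ × ℝ →L[ℝ] ℝ × ℝ →L[ℝ] ℝ} {p : ℝ × ℝ}
    (h : HasFDerivAt (fderiv ℝ u) H p) : Gop u p = curvatureForm (fderiv ℝ u p) H := by
  have hdir : ∀ v w, fderiv ℝ (fun q => fderiv ℝ u q v) p w = H w v := fun v w =>
    congrArg (· w) ((ContinuousLinearMap.apply ℝ ℝ v).hasFDerivAt.comp p h).fderiv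
  simp only [Gop, curvatureForm, hdir]

section AffineChange

variable {E F G : Type*} [NormedAddCommGroup E] [NormedSpace ℝ E] [NormedAddCommGroup F]
  [NormedSpace ℝ F] [NormedAddCommGroup G] [NormedSpace ℝ G]

theorem fderiv_comp_affine {u : F → G} (A : E →L[ℝ] F) (b : F) {q : E}
    (hu : DifferentiableAt ℝ u (A q + b)) :
    fderiv ℝ (fun q => u (A q + b)) q = (fderiv ℝ u (A q + b)).comp A :=
  (hu.hasFDerivAt.comp q (A.hasFDerivAt.add_const b)).fderiv

theorem hasFDerivAt_fderiv_comp_affine {u : F → G} (A : E →L[ℝ] F) (b : F) {p : E}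
    (hu : Differentiable ℝ u) (hu' : DifferentiableAt ℝ (fderiv ℝ u) (A p + b)) :
    HasFDerivAt (fderiv ℝ (fun q => u (A q + b)))
      ((fderiv ℝ (fderiv ℝ u) (A p + b)).bilinearComp A A) p := by
  have hD : fderiv ℝ (fun q => u (A q + b)) = fun q => (fderiv ℝ u (A q + b)).comp A :=
    funext fun q => fderiv_comp_affine A b (hu _)
  rw [hD]
  exact ((ContinuousLinearMap.compL ℝ E F G).flip A).hasFDerivAt.comp p
    (hu'.hasFDerivAt.comp p (A.hasFDerivAt.add_const b))

end AffineChange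

/-- Affine invariance of the operator: for the affine map `φ(x) = Ax + b` given by the
2×2 matrix with entries `a11 a12 ; a21 a22` and translation `(b1, b2)`, one has
`G[u ∘ φ](x) = (det A)² G[u](φ(x))` and
`cbrt (G[u ∘ φ]) = ((det A)²)^{1/3} · cbrt (G[u]) ∘ φ`. -/
theorem affine_curvature_affine_invariance (u : ℝ × ℝ → ℝ) (hu : ContDiff ℝ 2 u)
    (a11 a12 a21 a22 b1 b2 : ℝ) (p : ℝ × ℝ) :
    Gop (fun q => u (a11 * q.1 + a12 * q.2 + b1, a21 * q.1 + a22 * q.2 + b2)) p =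
        (a11 * a22 - a12 * a21) ^ 2 *
          Gop u (a11 * p.1 + a12 * p.2 + b1, a21 * p.1 + a22 * p.2 + b2) ∧
      cbrt (Gop (fun q => u (a11 * q.1 + a12 * q.2 + b1, a21 * q.1 + a22 * q.2 + b2)) p) =
        ((a11 * a22 - a12 * a21) ^ 2) ^ ((1 : ℝ) / 3) *
          cbrt (Gop u (a11 * p.1 + a12 * p.2 + b1, a21 * p.1 + a22 * p.2 + b2)) := by
  set A := linearMapOfEntries a11 a12 a21 a22
  have hφ : ∀ q : ℝ × ℝ,
      (a11 * q.1 + a12 * q.2 + b1, a21 * q.1 + a22 * q.2 + b2) = A q + (b1, b2) := by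
    intro q; simp [A]
  simp only [hφ]
  have hu1 : Differentiable ℝ u := hu.differentiable two_ne_zero
  have hu2 : Differentiable ℝ (fderiv ℝ u) :=
    (hu.fderiv_right (m := 1) le_rfl).differentiable one_ne_zero
  have hsymm : IsSymmSndFDerivAt ℝ u (A p + (b1, b2)) :=
    hu.contDiffAt.isSymmSndFDerivAt (by simp)
  have hG : Gop (fun q => u (A q + (b1, b2))) p =
      (a11 * a22 - a12 * a21) ^ 2 * Gop u (A p + (b1, b2)) := by
    rw [Gop_eq_curvatureForm (hasFDerivAt_fderiv_comp_affine A (b1, b2) hu1 (hu2 _)),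
      fderiv_comp_affine A (b1, b2) (hu1 _), curvatureForm_comp _ _ hsymm.eq,
      Gop_eq_curvatureForm (hu2 _).hasFDerivAt]
  exact ⟨hG, by rw [hG, cbrt_mul_of_nonneg (sq_nonneg _)]⟩
end

section
/- Morphology (relabelling) property of classical solutions of the affine curvature flow: let u : ℝ² × ℝ → ℝ be twice differentiable in the space variables and differentiable in time with (∂_t u(x,y,t))³ = G[u(·,·,t)](x,y) for all (x,y,t), and let g : ℝ → ℝ be twice differentiable. Then v := g ∘ u satisfies (∂_t v(x,y,t))³ = G[v(·,·,t)](x,y) for all (x,y,t). -/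
section

variable {E : Type*} [NormedAddCommGroup E] [NormedSpace ℝ E] {g : ℝ → ℝ} {w : E → ℝ}

theorem fderiv_real_comp_apply {q : E} (hg : DifferentiableAt ℝ g (w q))
    (hw : DifferentiableAt ℝ w q) (d : E) :
    fderiv ℝ (fun x => g (w x)) q d = deriv g (w q) * fderiv ℝ w q d := by
  have h : HasFDerivAt (fun x => g (w x)) (deriv g (w q) • fderiv ℝ w q) q :=
    hg.hasDerivAt.comp_hasFDerivAt q hw.hasFDerivAt
  rw [h.fderiv]
  rfl

theorem ContDiff.differentiable_fderiv_apply (hw : ContDiff ℝ 2 w) (d : E) :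
    Differentiable ℝ (fun q => fderiv ℝ w q d) :=
  ((hw.fderiv_right (m := 1) (by norm_num)).clm_apply contDiff_const).differentiable
    (by norm_num)

theorem fderiv_fderiv_real_comp_apply (hg : ContDiff ℝ 2 g) (hw : ContDiff ℝ 2 w) (p d e : E) :
    fderiv ℝ (fun q => fderiv ℝ (fun x => g (w x)) q d) p e =
      deriv (deriv g) (w p) * fderiv ℝ w p e * fderiv ℝ w p d +
        deriv g (w p) * fderiv ℝ (fun q => fderiv ℝ w q d) p e := by
  have hgd : Differentiable ℝ g := hg.differentiable (by norm_num)
  have hwd : Differentiable ℝ w := hw.differentiable (by norm_num)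
  have hg'd : Differentiable ℝ (deriv g) := hg.differentiable_deriv_two
  have first_order : (fun q => fderiv ℝ (fun x => g (w x)) q d) =
      fun q => deriv g (w q) * fderiv ℝ w q d :=
    funext fun q => fderiv_real_comp_apply (hgd _) (hwd _) d
  rw [first_order, fderiv_fun_mul (c := fun q => deriv g (w q)) ((hg'd.comp hwd) p)
    (hw.differentiable_fderiv_apply d p)]
  simp only [add_apply, smul_apply, smul_eq_mul]
  rw [fderiv_real_comp_apply (hg'd _) (hwd _)]
  ring

end

theorem Gop_real_comp {g : ℝ → ℝ} {w : ℝ × ℝ → ℝ} (hg : ContDiff ℝ 2 g) (hw : ContDiff ℝ 2 w)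
    (p : ℝ × ℝ) : Gop (fun q => g (w q)) p = deriv g (w p) ^ 3 * Gop w p := by
  have hgd : Differentiable ℝ g := hg.differentiable (by norm_num)
  have hwd : Differentiable ℝ w := hw.differentiable (by norm_num)
  simp only [Gop, fderiv_fderiv_real_comp_apply hg hw,
    fderiv_real_comp_apply (hgd (w p)) (hwd p)]
  ring

/-- Morphology (relabelling) property of classical solutions of the affine curvature
flow: if `(∂ₜ u)³ = G[u(·,·,t)]` pointwise and `g` is twice differentiable, then
`v = g ∘ u` satisfies `(∂ₜ v)³ = G[v(·,·,t)]` pointwise. -/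
theorem affine_curvature_flow_morphology (u : ℝ × ℝ → ℝ → ℝ) (g : ℝ → ℝ)
    (hu : ∀ t : ℝ, ContDiff ℝ 2 (fun p => u p t))
    (hut : ∀ p : ℝ × ℝ, Differentiable ℝ (u p))
    (hg : ContDiff ℝ 2 g)
    (hsol : ∀ (p : ℝ × ℝ) (t : ℝ), (deriv (u p) t) ^ 3 = Gop (fun q => u q t) p) :
    ∀ (p : ℝ × ℝ) (t : ℝ),
      (deriv (fun s : ℝ => g (u p s)) t) ^ 3 = Gop (fun q => g (u q t)) p := by
  intro p t
  have time_chain_rule : deriv (fun s => g (u p s)) t = deriv g (u p t) * deriv (u p) t :=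
    deriv_comp t (hg.differentiable (by norm_num) _) (hut p t)
  rw [time_chain_rule, Gop_real_comp hg (hu t), ← hsol p t]
  ring
end

section
/- Exact ellipse solution of the affine curvature flow: given a, b > 0, define u(x,y,t) := t + (3/4)·((b/a)x² + (a/b)y²)^{2/3}. Then for every t ∈ ℝ and every (x,y) ≠ (0,0), u is twice differentiable in space and differentiable in time at (x,y,t), ∂_t u = 1, and G[u(·,·,t)](x,y) = 1; that is, u is a classical solution of u_t = |∇u|·k[u]^{1/3} away from the origin. -/
/-! For `u = φ ∘ Q` with `Q(x, y) = α x² + β y²`, the terms of `G[u]` involving `φ''` cancel and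
`G[u] = 8 α β Q φ'(Q)³`. For `φ(s) = t + (3/4) s^{2/3}` one has `φ'(s)³ = 1 / (8 s)`, so
`G[u] = α β`, which is `1` for `α = b/a`, `β = a/b`. -/

open Filter Topology ContinuousLinearMap

theorem Gop_eq_of_hasFDerivAt {u ux uy : ℝ × ℝ → ℝ} {p : ℝ × ℝ} {Lx Ly : ℝ × ℝ →L[ℝ] ℝ}
    (hu : ∀ᶠ q in 𝓝 p, HasFDerivAt u (ux q • fst ℝ ℝ ℝ + uy q • snd ℝ ℝ ℝ) q)
    (hux : HasFDerivAt ux Lx p) (huy : HasFDerivAt uy Ly p) :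
    Gop u p = Lx (1, 0) * uy p ^ 2 - 2 * ux p * uy p * Lx (0, 1) + Ly (0, 1) * ux p ^ 2 := by
  have hx : (fun q => fderiv ℝ u q (1, 0)) =ᶠ[𝓝 p] ux := hu.mono fun q hq => by simp [hq.fderiv]
  have hy : (fun q => fderiv ℝ u q (0, 1)) =ᶠ[𝓝 p] uy := hu.mono fun q hq => by simp [hq.fderiv]
  simp [Gop, hx.fderiv_eq, hy.fderiv_eq, hux.fderiv, huy.fderiv, hu.self_of_nhds.fderiv]

def diagQuad (α β : ℝ) (q : ℝ × ℝ) : ℝ := α * q.1 ^ 2 + β * q.2 ^ 2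

theorem contDiff_diagQuad (α β : ℝ) {n : WithTop ℕ∞} : ContDiff ℝ n (diagQuad α β) := by
  unfold diagQuad; fun_prop

theorem diagQuad_pos {α β : ℝ} (hα : 0 < α) (hβ : 0 < β) {p : ℝ × ℝ} (hp : p ≠ 0) :
    0 < diagQuad α β p := by
  obtain ⟨x, y⟩ := p
  rcases not_and_or.mp (mt Prod.mk_eq_zero.mpr hp) with hx | hy
  · have : 0 < x ^ 2 := by positivity
    unfold diagQuad; positivity
  · have : 0 < y ^ 2 := by positivity
    unfold diagQuad; positivity

theorem hasFDerivAt_diagQuad (α β : ℝ) (q : ℝ × ℝ) :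
    HasFDerivAt (diagQuad α β) ((2 * α * q.1) • fst ℝ ℝ ℝ + (2 * β * q.2) • snd ℝ ℝ ℝ) q :=
  (((hasFDerivAt_fst.pow 2).const_mul α).add ((hasFDerivAt_snd.pow 2).const_mul β)).congr_fderiv
    (by ext <;> simp <;> ring)

theorem Gop_comp_diagQuad {φ φ' : ℝ → ℝ} {φ'' α β : ℝ} {p : ℝ × ℝ}
    (hφ : ∀ᶠ s in 𝓝 (diagQuad α β p), HasDerivAt φ (φ' s) s)
    (hφ' : HasDerivAt φ' φ'' (diagQuad α β p)) :
    Gop (fun q => φ (diagQuad α β q)) p =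
      8 * α * β * diagQuad α β p * φ' (diagQuad α β p) ^ 3 := by
  set Q := diagQuad α β
  have hφQ : ∀ᶠ q in 𝓝 p, HasDerivAt φ (φ' (Q q)) (Q q) :=
    (contDiff_diagQuad α β (n := 0)).continuous.continuousAt.eventually hφ
  have hu : ∀ᶠ q in 𝓝 p, HasFDerivAt (fun q => φ (Q q))
      ((2 * α * q.1 * φ' (Q q)) • fst ℝ ℝ ℝ + (2 * β * q.2 * φ' (Q q)) • snd ℝ ℝ ℝ) q :=
    hφQ.mono fun q hq => (hq.comp_hasFDerivAt q (hasFDerivAt_diagQuad α β q)).congr_fderiv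
      (by ext <;> simp <;> ring)
  have hφ'Q := hφ'.comp_hasFDerivAt p (hasFDerivAt_diagQuad α β p)
  have hux := (hasFDerivAt_fst.const_mul (2 * α)).mul hφ'Q
  have huy := (hasFDerivAt_snd.const_mul (2 * β)).mul hφ'Q
  rw [Gop_eq_of_hasFDerivAt hu hux huy]
  simp only [smul_add, Function.comp_apply, diagQuad, add_apply, smul_apply, coe_fst', smul_eq_mul,
    mul_one, coe_snd', mul_zero, add_zero, zero_add, Q]
  ring

theorem Gop_add_three_quarters_rpow_diagQuad {α β : ℝ} {p : ℝ × ℝ} (hp : 0 < diagQuad α β p)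
    (t : ℝ) : Gop (fun q => t + 3 / 4 * diagQuad α β q ^ ((2 : ℝ) / 3)) p = α * β := by
  have hφ : ∀ᶠ s in 𝓝 (diagQuad α β p),
      HasDerivAt (fun s => t + 3 / 4 * s ^ ((2 : ℝ) / 3)) (1 / 2 * s ^ (-(1 : ℝ) / 3)) s := by
    filter_upwards [eventually_gt_nhds hp] with s hs
    exact (((Real.hasDerivAt_rpow_const (p := 2 / 3) (Or.inl hs.ne')).const_mul _).const_add t
      ).congr_deriv (by norm_num; ring_nf)
  have hφ' := (Real.hasDerivAt_rpow_const (p := -1 / 3) (Or.inl hp.ne')).const_mul (1 / 2 : ℝ)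
  rw [Gop_comp_diagQuad hφ hφ', mul_pow, ← Real.rpow_mul_natCast hp.le]
  norm_num [Real.rpow_neg_one]
  field_simp

/-- Exact ellipse solution of the affine curvature flow: with
`u(x,y,t) = t + (3/4)((b/a)x² + (a/b)y²)^{2/3}`, away from the spatial origin the
spatial part is twice differentiable, `∂ₜ u = 1`, and `G[u(·,·,t)] = 1`. -/
theorem affine_curvature_flow_ellipse_solution (a b : ℝ) (ha : 0 < a) (hb : 0 < b) :
    ∀ p : ℝ × ℝ, p ≠ (0, 0) → ∀ t : ℝ,
      ContDiffAt ℝ 2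
        (fun q : ℝ × ℝ => (3 / 4) * ((b / a) * q.1 ^ 2 + (a / b) * q.2 ^ 2) ^ ((2 : ℝ) / 3))
        p ∧
      HasDerivAt
        (fun s : ℝ => s + (3 / 4) * ((b / a) * p.1 ^ 2 + (a / b) * p.2 ^ 2) ^ ((2 : ℝ) / 3))
        1 t ∧
      Gop (fun q : ℝ × ℝ =>
          t + (3 / 4) * ((b / a) * q.1 ^ 2 + (a / b) * q.2 ^ 2) ^ ((2 : ℝ) / 3)) p = 1 := by
  intro p hp t
  have hQ : 0 < diagQuad (b / a) (a / b) p := diagQuad_pos (by positivity) (by positivity) hp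
  refine ⟨contDiffAt_const.mul ((contDiff_diagQuad _ _).contDiffAt.rpow_const_of_ne hQ.ne'),
    (hasDerivAt_id' t).add_const _, ?_⟩
  exact (Gop_add_three_quarters_rpow_diagQuad hQ t).trans (by field_simp)
end

section
/- Nondecreasing decomposition of the regularized function: for K, L > 0 define A^{δ,+}(p,q) := A^δ(max(p,0), max(q,0)) and A^{δ,−}(p,q) := A^δ(min(p,0), min(q,0)). Then A^{δ,+} is nonnegative and nondecreasing in each variable, A^{δ,−} is nonpositive and nondecreasing in each variable, and for all p, q ∈ ℝ one has −A^δ(p,q) = A^{δ,+}(|p|, −q) + A^{δ,−}(−|p|, −q). -/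
/-- `A(p,q) = cbrt(p² q)`. -/
noncomputable def Afun (p q : ℝ) : ℝ := cbrt (p ^ 2 * q)

/-- The regularized function `A^δ(p,q) = sgn(q) · min(|A(p,q)|, K|p|, L|q|)`. -/
noncomputable def Adelta (K L p q : ℝ) : ℝ :=
  Real.sign q * min (|Afun p q|) (min (K * |p|) (L * |q|))

/-- `A^{δ,+}(p,q) = A^δ(p⁺, q⁺)`. -/
noncomputable def AdeltaP (K L p q : ℝ) : ℝ := Adelta K L (max p 0) (max q 0)

/-- `A^{δ,−}(p,q) = A^δ(p⁻, q⁻)`. -/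
noncomputable def AdeltaM (K L p q : ℝ) : ℝ := Adelta K L (min p 0) (min q 0)

namespace Function.Odd

variable {α β : Type*} [AddCommGroup α] [LinearOrder α] [IsOrderedAddMonoid α]
  [AddCommGroup β] [IsAddTorsionFree β] {f : α → β}

theorem apply_eq_sub_apply_max_zero (hf : f.Odd) (x : α) :
    f x = f (max x 0) - f (max (-x) 0) := by
  rcases le_total x 0 with hx | hx
  · rw [max_eq_right hx, max_eq_left (neg_nonneg.mpr hx), hf, hf.map_zero, zero_sub, neg_neg]
  · rw [max_eq_left hx, max_eq_right (neg_nonpos.mpr hx), hf.map_zero, sub_zero]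

end Function.Odd

theorem abs_cbrt (r : ℝ) : |cbrt r| = |r| ^ ((1 : ℝ) / 3) := by
  rw [cbrt, abs_mul, abs_of_nonneg (Real.rpow_nonneg (abs_nonneg r) _)]
  rcases lt_trichotomy r 0 with h | rfl | h
  · simp [Real.sign_of_neg h]
  · simp
  · simp [Real.sign_of_pos h]

theorem abs_Afun (p q : ℝ) : |Afun p q| = (p ^ 2 * |q|) ^ ((1 : ℝ) / 3) := by
  rw [Afun, abs_cbrt, abs_mul, abs_pow, sq_abs]

section Adelta

variable {K L : ℝ}

theorem Adelta_zero_right (K L p : ℝ) : Adelta K L p 0 = 0 := by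
  simp [Adelta]

theorem Adelta_abs_left (K L p q : ℝ) : Adelta K L |p| q = Adelta K L p q := by
  rw [Adelta, Adelta, abs_Afun, abs_Afun, sq_abs, abs_abs]

theorem Adelta_neg_neg (K L p q : ℝ) : Adelta K L (-p) (-q) = -Adelta K L p q := by
  rw [Adelta, Adelta, abs_Afun, abs_Afun, neg_sq, abs_neg, abs_neg, Real.sign_neg, neg_mul]

theorem Adelta_odd_right (K L p : ℝ) : (Adelta K L p).Odd := fun q => by
  rw [← Adelta_abs_left, ← abs_neg, Adelta_abs_left, Adelta_neg_neg]

theorem Adelta_nonneg (hK : 0 ≤ K) (hL : 0 ≤ L) (p : ℝ) {q : ℝ} (hq : 0 ≤ q) :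
    0 ≤ Adelta K L p q := by
  rcases hq.eq_or_lt with rfl | hq
  · rw [Adelta_zero_right]
  · rw [Adelta, Real.sign_of_pos hq, one_mul]
    exact le_min (abs_nonneg _) (le_min (by positivity) (by positivity))

theorem Adelta_le_Adelta (hK : 0 ≤ K) (hL : 0 ≤ L) {p₁ p₂ q₁ q₂ : ℝ}
    (hp₁ : 0 ≤ p₁) (hq₁ : 0 ≤ q₁) (hp : p₁ ≤ p₂) (hq : q₁ ≤ q₂) :
    Adelta K L p₁ q₁ ≤ Adelta K L p₂ q₂ := by
  rcases hq₁.eq_or_lt with rfl | hq₁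
  · rw [Adelta_zero_right]
    exact Adelta_nonneg hK hL p₂ hq
  have hq₂ : 0 < q₂ := hq₁.trans_le hq
  rw [Adelta, Adelta, Real.sign_of_pos hq₁, Real.sign_of_pos hq₂, one_mul, one_mul, abs_Afun,
    abs_Afun, abs_of_pos hq₁, abs_of_pos hq₂, abs_of_nonneg hp₁, abs_of_nonneg (hp₁.trans hp)]
  gcongr

theorem AdeltaP_nonneg (hK : 0 ≤ K) (hL : 0 ≤ L) (p q : ℝ) : 0 ≤ AdeltaP K L p q :=
  Adelta_nonneg hK hL _ (le_max_right q 0)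

theorem AdeltaP_le_AdeltaP (hK : 0 ≤ K) (hL : 0 ≤ L) {p₁ q₁ p₂ q₂ : ℝ}
    (hp : p₁ ≤ p₂) (hq : q₁ ≤ q₂) : AdeltaP K L p₁ q₁ ≤ AdeltaP K L p₂ q₂ :=
  Adelta_le_Adelta hK hL (le_max_right p₁ 0) (le_max_right q₁ 0)
    (max_le_max_right 0 hp) (max_le_max_right 0 hq)

theorem AdeltaM_eq_neg_AdeltaP (K L p q : ℝ) : AdeltaM K L p q = -AdeltaP K L (-p) (-q) := by
  rw [AdeltaM, AdeltaP, ← Adelta_neg_neg, ← neg_zero, max_neg_neg, max_neg_neg, neg_neg, neg_neg,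
    neg_zero]

theorem neg_Adelta_eq_AdeltaP_add_AdeltaM (K L p q : ℝ) :
    -Adelta K L p q = AdeltaP K L |p| (-q) + AdeltaM K L (-|p|) (-q) := by
  rw [AdeltaM_eq_neg_AdeltaP, AdeltaP, AdeltaP, neg_neg, neg_neg, max_eq_left (abs_nonneg p),
    Adelta_abs_left, Adelta_abs_left, ← sub_eq_add_neg, ← Adelta_odd_right K L p q,
    (Adelta_odd_right K L p).apply_eq_sub_apply_max_zero, neg_neg]

end Adelta

/-- Nondecreasing decomposition of the regularized function: `A^{δ,+}` is nonnegative and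
nondecreasing, `A^{δ,−}` is nonpositive and nondecreasing, and
`−A^δ(p,q) = A^{δ,+}(|p|,−q) + A^{δ,−}(−|p|,−q)`. -/
theorem Adelta_nondecreasing_decomposition (K L : ℝ) (hK : 0 < K) (hL : 0 < L) :
    (∀ p q : ℝ, 0 ≤ AdeltaP K L p q) ∧
    (∀ p₁ q₁ p₂ q₂ : ℝ, p₁ ≤ p₂ → q₁ ≤ q₂ → AdeltaP K L p₁ q₁ ≤ AdeltaP K L p₂ q₂) ∧
    (∀ p q : ℝ, AdeltaM K L p q ≤ 0) ∧
    (∀ p₁ q₁ p₂ q₂ : ℝ, p₁ ≤ p₂ → q₁ ≤ q₂ → AdeltaM K L p₁ q₁ ≤ AdeltaM K L p₂ q₂) ∧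
    (∀ p q : ℝ, -Adelta K L p q = AdeltaP K L |p| (-q) + AdeltaM K L (-|p|) (-q)) := by
  refine ⟨AdeltaP_nonneg hK.le hL.le, fun _ _ _ _ => AdeltaP_le_AdeltaP hK.le hL.le,
    fun p q => ?_, fun p₁ q₁ p₂ q₂ hp hq => ?_, neg_Adelta_eq_AdeltaP_add_AdeltaM K L⟩
  · rw [AdeltaM_eq_neg_AdeltaP, neg_nonpos]
    exact AdeltaP_nonneg hK.le hL.le _ _
  · rw [AdeltaM_eq_neg_AdeltaP, AdeltaM_eq_neg_AdeltaP, neg_le_neg_iff]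
    exact AdeltaP_le_AdeltaP hK.le hL.le (neg_le_neg hp) (neg_le_neg hq)
end
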